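/- Let G be a countable directed graph. The intersection of all meet irreducible WOT-closed two-sided ideals of the free semigroupoid algebra 𝔏_G is {0}, where an ideal is meet irreducible if it is not the intersection of two strictly larger ideals. -/

import Mathlib

noncomputable section

/-! ## Countable directed graphs and their path spaces -/

/-- A countable directed graph: countable sets of vertices and edges together
with source and range maps. -/
structure DGraph : Type 1 where
  V : Type
  E : Type
  countV : Countable V
  countE : Countable E
  src : E → V
  rng : E → V

namespace DGraph

variable (G : DGraph)

instance : Countable G.V := G.countV
instance : Countable G.E := G.countE

/-- A path of positive length is a nonempty list of edges `[e_k, …, e_1]`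
(written right to left) with `s(e_{i+1}) = r(e_i)`; a path of length zero is a vertex. -/
def Path : Type := G.V ⊕ {l : List G.E // l ≠ [] ∧ List.Chain' (fun a b => G.src a = G.rng b) l}

instance : Countable G.Path := by
  unfold Path; infer_instance

/-- The source vertex of a path. -/
def psrc : G.Path → G.V
  | .inl x => x
  | .inr l => G.src (l.1.getLast l.2.1)

/-- The range vertex of a path. -/
def prng : G.Path → G.V
  | .inl x => x
  | .inr l => G.rng (l.1.head l.2.1)

/-- The product `p q` is defined exactly when `s(p) = r(q)`. -/
def Composable (p q : G.Path) : Prop := G.psrc p = G.prng q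

/-- Composition of composable paths (`pcomp p q _` is the path "first `q`, then `p`"). -/
def pcomp : (p q : G.Path) → G.Composable p q → G.Path
  | .inl _, q, _ => q
  | .inr l, .inl _, _ => .inr l
  | .inr l, .inr m, h => .inr ⟨l.1 ++ m.1, by
      refine ⟨by simp [l.2.1], l.2.2.append m.2.2 ?_⟩
      intro a ha b hb
      rw [List.getLast?_eq_getLast_of_ne_nil l.2.1, Option.mem_some_iff] at ha
      rw [List.head?_eq_head m.2.1, Option.mem_some_iff] at hb
      subst ha; subst hb
      exact h⟩

/-- The length of a path. -/
def plen : G.Path → ℕ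
  | .inl _ => 0
  | .inr l => l.1.length

/-- The list of edges of a path (ordered from last edge traversed to first). -/
def pedges : G.Path → List G.E
  | .inl _ => []
  | .inr l => l.1

/-- A vertex regarded as a path of length zero. -/
def vpath (x : G.V) : G.Path := .inl x

/-- An edge regarded as a path of length one. -/
def epath (e : G.E) : G.Path := .inr ⟨[e], by simp; exact List.isChain_singleton _⟩

/-- There is a directed path from `x` to `y`. -/
def Reach (x y : G.V) : Prop := ∃ p : G.Path, G.psrc p = x ∧ G.prng p = y

/-- `x` and `y` are adjacent in the underlying undirected graph. -/
def UAdj (x y : G.V) : Prop :=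
  ∃ e : G.E, (G.src e = x ∧ G.rng e = y) ∨ (G.src e = y ∧ G.rng e = x)

/-- `x` and `y` lie in the same connected component of the underlying undirected graph. -/
def SameUComp : G.V → G.V → Prop := Relation.ReflTransGen G.UAdj

/-- `G` is transitive in each component: any two vertices in the same connected component
of the underlying undirected graph are joined by a directed path. -/
def TransitiveInComponents : Prop := ∀ x y : G.V, G.SameUComp x y → G.Reach x y

/-- `x` and `y` are mutually reachable, i.e. lie in the same transitive component. -/
def MutReach (x y : G.V) : Prop := G.Reach x y ∧ G.Reach y x

/-- The vertex `x` supports a loop edge. -/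
def HasLoop (x : G.V) : Prop := ∃ e : G.E, G.src e = x ∧ G.rng e = x

/-- The vertex `x` supports a cycle (a path of positive length from `x` to `x`). -/
def OnCycle (x : G.V) : Prop := ∃ p : G.Path, 0 < G.plen p ∧ G.psrc p = x ∧ G.prng p = x

end DGraph

/-! ## The free semigroupoid algebra -/

open ContinuousLinearMap in
/-- The closure of a set of Hilbert space operators in the weak operator topology. -/
def wotClosure {H : Type} [NormedAddCommGroup H] [InnerProductSpace ℂ H]
    (S : Set (H →L[ℂ] H)) : Set (H →L[ℂ] H) :=
  ((ContinuousLinearMapWOT.linearEquiv ℂ : (H →WOT[ℂ] H) ≃ₗ[ℂ] (H →L[ℂ] H)).symm) ⁻¹' closure (((ContinuousLinearMapWOT.linearEquiv ℂ : (H →WOT[ℂ] H) ≃ₗ[ℂ] (H →L[ℂ] H)).symm) '' S)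

/-- A map defined on the bounded operators of a Hilbert space is WOT-continuous on a
set `S` if it is continuous on `S` from the weak operator topology to the topology of the
target (for an operator target, use the weak operator topology there as well). -/
def WOTContinuousOn {H : Type} [NormedAddCommGroup H] [InnerProductSpace ℂ H]
    {B : Type*} [TopologicalSpace B]
    (ρ : (H →L[ℂ] H) → B) (S : Set (H →L[ℂ] H)) : Prop :=
  ContinuousOn (fun A => ρ (((ContinuousLinearMapWOT.linearEquiv ℂ : (H →WOT[ℂ] H) ≃ₗ[ℂ] (H →L[ℂ] H)).symm).symm A))
    (((ContinuousLinearMapWOT.linearEquiv ℂ : (H →WOT[ℂ] H) ≃ₗ[ℂ] (H →L[ℂ] H)).symm) '' S)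

/-- `ρ` restricts to a (ℂ-linear, multiplicative) algebra homomorphism on the set `S`. -/
structure IsHomOn {A B : Type*} [Ring A] [Ring B] [Module ℂ A] [Module ℂ B]
    (ρ : A → B) (S : Set A) : Prop where
  map_add : ∀ a ∈ S, ∀ b ∈ S, ρ (a + b) = ρ a + ρ b
  map_mul : ∀ a ∈ S, ∀ b ∈ S, ρ (a * b) = ρ a * ρ b
  map_smul : ∀ (c : ℂ), ∀ a ∈ S, ρ (c • a) = c • ρ a

namespace DGraph

variable (G : DGraph)

/-- The Fock space `ℓ²(𝔽⁺(G))` of the graph `G`. -/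
abbrev FockSpace : Type := lp (fun _ : G.Path => ℂ) 2

/-- The standard basis vector `ξ_w` of `ℓ²(𝔽⁺(G))`. -/
def xi (w : G.Path) : G.FockSpace :=
  letI := Classical.decEq G.Path
  lp.single 2 w (1 : ℂ)

/-- `L` is the left regular representation of `𝔽⁺(G)`:
`L p ξ_w = ξ_{pw}` if `s(p) = r(w)` and `L p ξ_w = 0` otherwise. -/
def IsLeftRegular (L : G.Path → (G.FockSpace →L[ℂ] G.FockSpace)) : Prop :=
  (∀ (p w : G.Path) (h : G.Composable p w), L p (G.xi w) = G.xi (G.pcomp p w h)) ∧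
  (∀ p w : G.Path, ¬ G.Composable p w → L p (G.xi w) = 0)

/-- The free semigroupoid algebra `𝔏_G`: the WOT-closed algebra generated by the left
regular representation, as a subset of `B(ℓ²(𝔽⁺(G)))`. -/
def LGset (L : G.Path → (G.FockSpace →L[ℂ] G.FockSpace)) :
    Set (G.FockSpace →L[ℂ] G.FockSpace) :=
  wotClosure ((Algebra.adjoin ℂ (Set.range L) : Subalgebra ℂ _) : Set _)

end DGraph

namespace DGraph

variable (G : DGraph)

/-- A WOT-closed two-sided ideal of the free semigroupoid algebra `𝔏_G`. -/
def IsWotClosedIdeal (L : G.Path → (G.FockSpace →L[ℂ] G.FockSpace))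
    (J : Set (G.FockSpace →L[ℂ] G.FockSpace)) : Prop :=
  J ⊆ G.LGset L ∧ (0 : G.FockSpace →L[ℂ] G.FockSpace) ∈ J ∧
  (∀ a ∈ J, ∀ b ∈ J, a + b ∈ J) ∧
  (∀ (c : ℂ), ∀ a ∈ J, c • a ∈ J) ∧
  (∀ a ∈ G.LGset L, ∀ b ∈ J, a * b ∈ J ∧ b * a ∈ J) ∧
  wotClosure J = J

/-- An ideal is meet irreducible if it is not the intersection of two strictly
larger ideals. -/
def IsMeetIrreducible (L : G.Path → (G.FockSpace →L[ℂ] G.FockSpace))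
    (J : Set (G.FockSpace →L[ℂ] G.FockSpace)) : Prop :=
  ¬ ∃ J₁ J₂, G.IsWotClosedIdeal L J₁ ∧ G.IsWotClosedIdeal L J₂ ∧
      J ⊂ J₁ ∧ J ⊂ J₂ ∧ J = J₁ ∩ J₂

end DGraph


/-!
For a path `w` let `J_w` (`vanishingIdeal L w`) consist of the `A ∈ 𝔏_G` whose Fourier
coefficients `⟪ξ_p, A ξ_{s(p)}⟫` vanish at every factor `p` of `w`. Identities between matrix
coefficients that hold for `1` and every `L p` persist on `𝔏_G` by WOT-continuity; this gives
`A ξ_q = ∑ₚ (coeff p A) ξ_{pq}`, from which `J_w` is seen to be a two-sided ideal (a factor of a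
factor of `w` is a factor of `w`), and it is WOT-closed as an intersection of kernels of matrix
coefficients.

`J_w` is meet irreducible. If `K ⊋ J_w` is an ideal, pick `z ∈ K \ J_w` and a factor `u` of
`w = q u q'` of minimal length at which `z` has a nonzero coefficient; then `L q * z * L q' ∈ K`
has, among the factors of `w`, a nonzero coefficient only at `w` itself. If `J_w = J₁ ∩ J₂` with
`Jᵢ ⊋ J_w`, such elements `Bᵢ ∈ Jᵢ` with coefficients `cᵢ ≠ 0` at `w` give
`c₂ B₁ - c₁ B₂ ∈ J_w ⊆ J₂`, so `c₂ B₁ ∈ J₁ ∩ J₂ = J_w`, although its coefficient at `w` is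
`c₂ c₁ ≠ 0`.

Finally, an operator lying in every `J_w` has all coefficients zero, hence vanishes.
-/

open ContinuousLinearMapWOT (ofCLM toCLM continuous_dual_apply continuous_of_dual_apply_continuous)
open scoped InnerProductSpace

section WOT

variable {H : Type} [NormedAddCommGroup H] [InnerProductSpace ℂ H]

lemma mem_wotClosure_iff {S : Set (H →L[ℂ] H)} {A : H →L[ℂ] H} :
    A ∈ wotClosure S ↔ ofCLM A ∈ closure (ofCLM '' S) :=
  Iff.rfl

lemma subset_wotClosure (S : Set (H →L[ℂ] H)) : S ⊆ wotClosure S :=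
  fun _ hA => subset_closure (Set.mem_image_of_mem _ hA)

lemma wotClosure_subset {S C : Set (H →L[ℂ] H)} (hSC : S ⊆ C)
    (hC : IsClosed (toCLM ⁻¹' C)) : wotClosure S ⊆ C := fun _ hA =>
  closure_minimal (by rintro _ ⟨B, hB, rfl⟩; exact hSC hB) hC hA

lemma wotClosure_eq_self {S : Set (H →L[ℂ] H)} (hS : IsClosed (toCLM ⁻¹' S)) :
    wotClosure S = S :=
  (wotClosure_subset subset_rfl hS).antisymm (subset_wotClosure S)

lemma isClosed_preimage_wotClosure (S : Set (H →L[ℂ] H)) :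
    IsClosed (toCLM ⁻¹' wotClosure S) :=
  isClosed_closure

lemma isClosed_preimage_setOf_inner_eq (x y x' y' : H) :
    IsClosed (toCLM ⁻¹' {A : H →L[ℂ] H | ⟪y, A x⟫_ℂ = ⟪y', A x'⟫_ℂ}) :=
  isClosed_eq (continuous_dual_apply x (innerSL ℂ y)) (continuous_dual_apply x' (innerSL ℂ y'))

lemma ContinuousLinearMapWOT.continuous_mul_const (B : H →WOT[ℂ] H) :
    Continuous (· * B) :=
  continuous_of_dual_apply_continuous fun x y => continuous_dual_apply (B x) y

lemma ContinuousLinearMapWOT.continuous_const_mul (B : H →WOT[ℂ] H) :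
    Continuous (B * ·) :=
  continuous_of_dual_apply_continuous fun x y => continuous_dual_apply x (y.comp (toCLM B))

/-- Multiplication is only separately continuous in the WOT, so products are moved into the
closure one factor at a time. -/
def Subalgebra.wotClosure (S : Subalgebra ℂ (H →L[ℂ] H)) : Subalgebra ℂ (H →L[ℂ] H) where
  carrier := _root_.wotClosure S
  add_mem' {A B} hA hB := mem_wotClosure_iff.2 <| map_mem_closure₂ continuous_add
      (mem_wotClosure_iff.1 hA) (mem_wotClosure_iff.1 hB) <| by
    rintro _ ⟨a, ha, rfl⟩ _ ⟨b, hb, rfl⟩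
    exact ⟨a + b, S.add_mem ha hb, rfl⟩
  mul_mem' {A B} hA hB := by
    have mul_right : ∀ b ∈ S, A * b ∈ _root_.wotClosure S := fun b hb =>
      mem_wotClosure_iff.2 <| map_mem_closure (f := (· * ofCLM b))
        (ofCLM b).continuous_mul_const (mem_wotClosure_iff.1 hA) <| by
        rintro _ ⟨a, ha, rfl⟩
        exact ⟨a * b, S.mul_mem ha hb, rfl⟩
    refine mem_wotClosure_iff.2 <| closure_closure.subset <|
      map_mem_closure (f := (ofCLM A * ·)) (ofCLM A).continuous_const_mul
        (mem_wotClosure_iff.1 hB) ?_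
    rintro _ ⟨b, hb, rfl⟩
    exact mul_right b hb
  algebraMap_mem' c := subset_wotClosure _ (S.algebraMap_mem c)

lemma inner_apply_eq_of_mem_wotClosure_adjoin {X : Set (H →L[ℂ] H)} {x y x' y' : H}
    (hX : ∀ B ∈ Submonoid.closure X, ⟪y, B x⟫_ℂ = ⟪y', B x'⟫_ℂ) {A : H →L[ℂ] H}
    (hA : A ∈ wotClosure (Algebra.adjoin ℂ X : Set (H →L[ℂ] H))) :
    ⟪y, A x⟫_ℂ = ⟪y', A x'⟫_ℂ := by
  let f : (H →L[ℂ] H) →ₗ[ℂ] ℂ :=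
    ((innerSL ℂ y).comp (ContinuousLinearMap.apply ℂ H x)).toLinearMap
  let g : (H →L[ℂ] H) →ₗ[ℂ] ℂ :=
    ((innerSL ℂ y').comp (ContinuousLinearMap.apply ℂ H x')).toLinearMap
  have hadjoin : (Algebra.adjoin ℂ X : Set (H →L[ℂ] H)) ⊆ LinearMap.eqLocus f g := by
    rw [← Subalgebra.coe_toSubmodule, Algebra.adjoin_eq_span, SetLike.coe_subset_coe,
      Submodule.span_le]
    exact hX
  exact wotClosure_subset hadjoin (isClosed_preimage_setOf_inner_eq x y x' y') hA

end WOT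

namespace DGraph

variable {G : DGraph}

@[simp] lemma psrc_vpath (x : G.V) : G.psrc (G.vpath x) = x := rfl
@[simp] lemma prng_vpath (x : G.V) : G.prng (G.vpath x) = x := rfl
@[simp] lemma pedges_vpath (x : G.V) : G.pedges (G.vpath x) = [] := rfl

lemma plen_eq_length_pedges (p : G.Path) : G.plen p = (G.pedges p).length := by
  cases p <;> rfl

@[simp] lemma pedges_pcomp (p q : G.Path) (h : G.Composable p q) :
    G.pedges (G.pcomp p q h) = G.pedges p ++ G.pedges q := by
  cases p <;> cases q <;> simp [pcomp, pedges]

@[simp] lemma prng_pcomp (p q : G.Path) (h : G.Composable p q) :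
    G.prng (G.pcomp p q h) = G.prng p := by
  rcases p with x | l
  · exact h.symm
  rcases q with y | m
  · rfl
  · exact congrArg G.rng (List.head_append_of_ne_nil l.2.1)

@[simp] lemma psrc_pcomp (p q : G.Path) (h : G.Composable p q) :
    G.psrc (G.pcomp p q h) = G.psrc q := by
  rcases p with x | l
  · rfl
  rcases q with y | m
  · exact h
  · exact congrArg G.src (List.getLast_append_of_ne_nil _ m.2.1)

lemma eq_vpath_of_pedges_eq_nil {p : G.Path} (h : G.pedges p = []) :
    p = G.vpath (G.psrc p) := by
  rcases p with x | l
  · rfl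
  · exact absurd h l.2.1

lemma ext_of_pedges_of_psrc {p q : G.Path} (he : G.pedges p = G.pedges q)
    (hs : G.psrc p = G.psrc q) : p = q := by
  rcases p with x | l <;> rcases q with y | m
  · exact congrArg Sum.inl hs
  · exact absurd he.symm m.2.1
  · exact absurd he l.2.1
  · exact congrArg Sum.inr (Subtype.ext he)

lemma ext_of_pedges_of_prng {p q : G.Path} (he : G.pedges p = G.pedges q)
    (hr : G.prng p = G.prng q) : p = q := by
  rcases p with x | l <;> rcases q with y | m
  · exact congrArg Sum.inl hr
  · exact absurd he.symm m.2.1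
  · exact absurd he l.2.1
  · exact congrArg Sum.inr (Subtype.ext he)

lemma composable_vpath_psrc (p : G.Path) : G.Composable p (G.vpath (G.psrc p)) := rfl

lemma composable_vpath_prng (p : G.Path) : G.Composable (G.vpath (G.prng p)) p := rfl

lemma pcomp_vpath_psrc (p : G.Path) :
    G.pcomp p (G.vpath (G.psrc p)) (composable_vpath_psrc p) = p :=
  ext_of_pedges_of_psrc (by simp) (by simp)

@[simp] lemma plen_pcomp (p q : G.Path) (h : G.Composable p q) :
    G.plen (G.pcomp p q h) = G.plen p + G.plen q := by
  simp [plen_eq_length_pedges]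

lemma pcomp_eq_right_iff {p q : G.Path} (h : G.Composable p q) :
    G.pcomp p q h = q ↔ p = G.vpath (G.psrc p) := by
  refine ⟨fun hpq => eq_vpath_of_pedges_eq_nil ?_, fun hp => ext_of_pedges_of_psrc ?_ (by simp)⟩
  · simpa using congrArg G.pedges hpq
  · rw [pedges_pcomp, hp, pedges_vpath, List.nil_append]

lemma pcomp_left_cancel {q u v : G.Path} {hu : G.Composable q u} {hv : G.Composable q v}
    (h : G.pcomp q u hu = G.pcomp q v hv) : u = v := by
  have he := congrArg G.pedges h
  have hs := congrArg G.psrc h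
  simp only [pedges_pcomp, psrc_pcomp] at he hs
  exact ext_of_pedges_of_psrc (List.append_cancel_left he) hs

lemma pcomp_right_cancel {q u v : G.Path} {hu : G.Composable u q} {hv : G.Composable v q}
    (h : G.pcomp u q hu = G.pcomp v q hv) : u = v := by
  have he := congrArg G.pedges h
  have hr := congrArg G.prng h
  simp only [pedges_pcomp, prng_pcomp] at he hr
  exact ext_of_pedges_of_prng (List.append_cancel_right he) hr

lemma composable_pcomp_right_iff {p q r : G.Path} (h : G.Composable q r) :
    G.Composable p (G.pcomp q r h) ↔ G.Composable p q := by
  simp [Composable]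

lemma composable_pcomp_left_iff {p q r : G.Path} (h : G.Composable p q) :
    G.Composable (G.pcomp p q h) r ↔ G.Composable q r := by
  simp [Composable]

lemma pcomp_assoc {p q r : G.Path} (h₁ : G.Composable p q) (h₂ : G.Composable q r)
    (h₃ : G.Composable (G.pcomp p q h₁) r) (h₄ : G.Composable p (G.pcomp q r h₂)) :
    G.pcomp (G.pcomp p q h₁) r h₃ = G.pcomp p (G.pcomp q r h₂) h₄ :=
  ext_of_pedges_of_psrc (by simp) (by simp)

def IsFactor (p w : G.Path) : Prop :=
  ∃ (q q' : G.Path) (h₁ : G.Composable p q') (h₂ : G.Composable q (G.pcomp p q' h₁)),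
    G.pcomp q (G.pcomp p q' h₁) h₂ = w

lemma isFactor_pcomp_left {p q : G.Path} (h : G.Composable p q) :
    IsFactor p (G.pcomp p q h) :=
  ⟨G.vpath (G.prng p), q, h, (composable_pcomp_right_iff h).2 (composable_vpath_prng p),
    ext_of_pedges_of_psrc (by simp) (by simp)⟩

lemma isFactor_pcomp_right {p q : G.Path} (h : G.Composable p q) :
    IsFactor q (G.pcomp p q h) :=
  ⟨p, G.vpath (G.psrc q), composable_vpath_psrc q, (composable_pcomp_right_iff _).2 h,
    ext_of_pedges_of_psrc (by simp) (by simp)⟩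

lemma IsFactor.refl (w : G.Path) : IsFactor w w := by
  simpa only [pcomp_vpath_psrc] using isFactor_pcomp_left (composable_vpath_psrc w)

lemma IsFactor.trans {u v w : G.Path} (huv : IsFactor u v) (hvw : IsFactor v w) :
    IsFactor u w := by
  obtain ⟨a, a', h₁, h₂, rfl⟩ := huv
  obtain ⟨b, b', g₁, g₂, rfl⟩ := hvw
  have ha'b' := (composable_pcomp_left_iff h₁).1 ((composable_pcomp_left_iff h₂).1 g₁)
  have hba := (composable_pcomp_right_iff _).1 ((composable_pcomp_right_iff _).1 g₂)
  have hu := (composable_pcomp_right_iff ha'b').2 h₁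
  refine ⟨G.pcomp b a hba, G.pcomp a' b' ha'b', hu,
    (composable_pcomp_left_iff _).2 ((composable_pcomp_right_iff _).2
      ((composable_pcomp_right_iff _).1 h₂)), ext_of_pedges_of_psrc (by simp) (by simp)⟩

lemma IsFactor.eq_of_plen_le {p w : G.Path} (h : IsFactor p w) (hlen : G.plen w ≤ G.plen p) :
    p = w := by
  obtain ⟨q, q', h₁, h₂, rfl⟩ := h
  simp only [plen_eq_length_pedges, pedges_pcomp, List.length_append] at hlen
  have hq : G.pedges q = [] := List.length_eq_zero_iff.mp (by omega)
  have hq' : G.pedges q' = [] := List.length_eq_zero_iff.mp (by omega)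
  refine ext_of_pedges_of_psrc (by simp [hq, hq']) ?_
  rw [psrc_pcomp, psrc_pcomp, h₁, eq_vpath_of_pedges_eq_nil hq', prng_vpath, psrc_vpath]

lemma IsFactor.plen_lt {p w : G.Path} (h : IsFactor p w) (hne : p ≠ w) :
    G.plen p < G.plen w :=
  lt_of_not_ge fun hle => hne (h.eq_of_plen_le hle)

attribute [local instance] Classical.propDecidable

lemma inner_xi_left (w : G.Path) (f : G.FockSpace) : ⟪G.xi w, f⟫_ℂ = f w := by
  simp [xi, lp.inner_single_left, RCLike.inner_apply]

lemma inner_xi_xi (w u : G.Path) : ⟪G.xi w, G.xi u⟫_ℂ = if w = u then 1 else 0 := by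
  rw [inner_xi_left, xi, lp.single_apply, Pi.single_apply]

lemma ext_inner_xi {f g : G.FockSpace} (h : ∀ u, ⟪G.xi u, f⟫_ℂ = ⟪G.xi u, g⟫_ℂ) : f = g :=
  lp.ext (funext fun u => by simpa only [inner_xi_left] using h u)

lemma ext_xi {E : Type*} [NormedAddCommGroup E] [NormedSpace ℂ E] {T S : G.FockSpace →L[ℂ] E}
    (h : ∀ u, T (G.xi u) = S (G.xi u)) : T = S := by
  ext f
  have hxi : ∀ u, lp.single 2 u (f u) = f u • G.xi u := fun u => by
    rw [xi, ← lp.single_smul, smul_eq_mul, mul_one]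
  have hf : HasSum (fun u => f u • G.xi u) f := by
    simpa only [hxi] using lp.hasSum_single ENNReal.ofNat_ne_top f
  exact (by simpa only [map_smul, h] using hf.mapL T : HasSum _ (T f)).unique
    (by simpa only [map_smul] using hf.mapL S)

variable {L : G.Path → (G.FockSpace →L[ℂ] G.FockSpace)}

variable (L) in
def freeSemigroupoidAlgebra : Subalgebra ℂ (G.FockSpace →L[ℂ] G.FockSpace) :=
  (Algebra.adjoin ℂ (Set.range L)).wotClosure

lemma coe_freeSemigroupoidAlgebra : (G.freeSemigroupoidAlgebra L : Set _) = G.LGset L :=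
  rfl

lemma L_mem_LGset (p : G.Path) : L p ∈ G.LGset L :=
  subset_wotClosure _ (Algebra.subset_adjoin ⟨p, rfl⟩)

def coeff (p : G.Path) : (G.FockSpace →L[ℂ] G.FockSpace) →ₗ[ℂ] ℂ :=
  ((innerSL ℂ (G.xi p)).comp
    (ContinuousLinearMap.apply ℂ G.FockSpace (G.xi (G.vpath (G.psrc p))))).toLinearMap

lemma coeff_apply (p : G.Path) (A : G.FockSpace →L[ℂ] G.FockSpace) :
    coeff p A = ⟪G.xi p, A (G.xi (G.vpath (G.psrc p)))⟫_ℂ :=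
  rfl

variable (L) in
def vanishingIdeal (w : G.Path) : Submodule ℂ (G.FockSpace →L[ℂ] G.FockSpace) :=
  Subalgebra.toSubmodule (G.freeSemigroupoidAlgebra L) ⊓
    ⨅ (p : G.Path) (_ : IsFactor p w), LinearMap.ker (coeff p)

lemma mem_vanishingIdeal {w : G.Path} {A : G.FockSpace →L[ℂ] G.FockSpace} :
    A ∈ G.vanishingIdeal L w ↔ A ∈ G.LGset L ∧ ∀ p, IsFactor p w → coeff p A = 0 := by
  simp [vanishingIdeal, Submodule.mem_iInf, ← coe_freeSemigroupoidAlgebra]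

lemma isClosed_preimage_vanishingIdeal (w : G.Path) :
    IsClosed (toCLM ⁻¹' (G.vanishingIdeal L w : Set (G.FockSpace →L[ℂ] G.FockSpace))) := by
  have hJ : (G.vanishingIdeal L w : Set (G.FockSpace →L[ℂ] G.FockSpace)) =
      G.LGset L ∩ ⋂ (p : G.Path) (_ : IsFactor p w), {A | coeff p A = 0} := by
    ext
    simp [mem_vanishingIdeal]
  rw [hJ, Set.preimage_inter, Set.preimage_iInter₂]
  exact (isClosed_preimage_wotClosure _).inter (isClosed_biInter fun p _ =>
    isClosed_eq (continuous_dual_apply _ (innerSL ℂ (G.xi p))) continuous_const)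

namespace IsLeftRegular

variable (hL : G.IsLeftRegular L)
include hL

lemma mul_eq {p q : G.Path} (h : G.Composable p q) : L p * L q = L (G.pcomp p q h) := by
  refine ext_xi fun u => ?_
  rw [mul_apply_eq_comp]
  by_cases hqu : G.Composable q u
  · rw [hL.1 q u hqu, hL.1 p _ ((composable_pcomp_right_iff hqu).2 h),
      hL.1 _ u ((composable_pcomp_left_iff h).2 hqu), pcomp_assoc]
  · rw [hL.2 q u hqu, map_zero, hL.2 _ u (mt (composable_pcomp_left_iff h).1 hqu)]

lemma mul_eq_zero {p q : G.Path} (h : ¬ G.Composable p q) : L p * L q = 0 := by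
  refine ext_xi fun u => ?_
  rw [mul_apply_eq_comp, zero_apply]
  by_cases hqu : G.Composable q u
  · rw [hL.1 q u hqu, hL.2 p _ (mt (composable_pcomp_right_iff hqu).1 h)]
  · rw [hL.2 q u hqu, map_zero]

lemma mem_submonoidClosure {B : G.FockSpace →L[ℂ] G.FockSpace}
    (hB : B ∈ Submonoid.closure (Set.range L)) : B = 1 ∨ B = 0 ∨ ∃ p, B = L p := by
  induction hB using Submonoid.closure_induction with
  | mem _ hb => exact .inr (.inr (hb.imp fun _ => Eq.symm))
  | one => exact .inl rfl
  | mul _ _ _ _ ihx ihy =>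
    rcases ihx with rfl | rfl | ⟨p, rfl⟩
    · simpa only [one_mul] using ihy
    · exact .inr (.inl (zero_mul _))
    rcases ihy with rfl | rfl | ⟨q, rfl⟩
    · exact .inr (.inr ⟨p, mul_one _⟩)
    · exact .inr (.inl (mul_zero _))
    by_cases h : G.Composable p q
    · exact .inr (.inr ⟨_, hL.mul_eq h⟩)
    · exact .inr (.inl (hL.mul_eq_zero h))

lemma inner_apply_eq {x y x' y' : G.FockSpace} (h₁ : ⟪y, x⟫_ℂ = ⟪y', x'⟫_ℂ)
    (hL_eq : ∀ p, ⟪y, L p x⟫_ℂ = ⟪y', L p x'⟫_ℂ) {A : G.FockSpace →L[ℂ] G.FockSpace}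
    (hA : A ∈ G.LGset L) : ⟪y, A x⟫_ℂ = ⟪y', A x'⟫_ℂ := by
  refine inner_apply_eq_of_mem_wotClosure_adjoin (fun B hB => ?_) hA
  rcases hL.mem_submonoidClosure hB with rfl | rfl | ⟨p, rfl⟩
  · exact h₁
  · simp
  · exact hL_eq p

lemma inner_apply_eq_zero {x y : G.FockSpace} (h₁ : ⟪y, x⟫_ℂ = 0)
    (hL_eq : ∀ p, ⟪y, L p x⟫_ℂ = 0) {A : G.FockSpace →L[ℂ] G.FockSpace}
    (hA : A ∈ G.LGset L) : ⟪y, A x⟫_ℂ = 0 := by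
  simpa using hL.inner_apply_eq (x' := 0) (y' := 0) (by simpa using h₁) (by simpa using hL_eq) hA

lemma apply_xi_vpath (p : G.Path) (x : G.V) :
    L p (G.xi (G.vpath x)) = if G.psrc p = x then G.xi p else 0 := by
  split_ifs with h
  · subst h
    rw [hL.1 p _ (composable_vpath_psrc p), pcomp_vpath_psrc]
  · exact hL.2 p _ h

lemma inner_xi_pcomp_apply {q v : G.Path} (h : G.Composable q v) (f : G.FockSpace) :
    ⟪G.xi (G.pcomp q v h), L q f⟫_ℂ = ⟪G.xi v, f⟫_ℂ := by
  refine congrArg (· f) (ext_xi (T := (innerSL ℂ (G.xi (G.pcomp q v h))).comp (L q))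
    (S := innerSL ℂ (G.xi v)) fun u => ?_)
  simp only [ContinuousLinearMap.coe_comp, Function.comp_apply, innerSL_apply_apply]
  by_cases hqu : G.Composable q u
  · rw [hL.1 q u hqu, inner_xi_xi, inner_xi_xi]
    exact if_congr ⟨pcomp_left_cancel, fun e => by subst e; rfl⟩ rfl rfl
  · rw [hL.2 q u hqu, inner_zero_right, inner_xi_xi, if_neg]
    rintro rfl
    exact hqu h

lemma inner_xi_apply_eq_zero {q p : G.Path} (h : ∀ v (hv : G.Composable q v), G.pcomp q v hv ≠ p)
    (f : G.FockSpace) : ⟪G.xi p, L q f⟫_ℂ = 0 := by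
  refine congrArg (· f) (ext_xi (T := (innerSL ℂ (G.xi p)).comp (L q)) (S := 0) fun u => ?_)
  simp only [ContinuousLinearMap.coe_comp, Function.comp_apply, innerSL_apply_apply,
    zero_apply]
  by_cases hqu : G.Composable q u
  · rw [hL.1 q u hqu, inner_xi_xi, if_neg (h u hqu).symm]
  · rw [hL.2 q u hqu, inner_zero_right]

lemma inner_xi_pcomp_apply_xi {p q : G.Path} (h : G.Composable p q) (u : G.Path) :
    ⟪G.xi (G.pcomp p q h), L u (G.xi q)⟫_ℂ = if u = p then 1 else 0 := by
  by_cases hu : G.Composable u q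
  · rw [hL.1 u q hu, inner_xi_xi]
    exact if_congr ⟨fun e => (pcomp_right_cancel e).symm, fun e => by subst e; rfl⟩ rfl rfl
  · rw [hL.2 u q hu, inner_zero_right, if_neg]
    rintro rfl
    exact hu h

variable {A : G.FockSpace →L[ℂ] G.FockSpace}

lemma inner_xi_pcomp_apply_xi_eq_coeff (hA : A ∈ G.LGset L) {p q : G.Path}
    (h : G.Composable p q) : ⟪G.xi (G.pcomp p q h), A (G.xi q)⟫_ℂ = coeff p A := by
  refine hL.inner_apply_eq ?_ (fun u => ?_) hA
  · simp only [inner_xi_xi, pcomp_eq_right_iff]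
  · rw [hL.inner_xi_pcomp_apply_xi h, ← hL.inner_xi_pcomp_apply_xi (composable_vpath_psrc p),
      pcomp_vpath_psrc]

lemma inner_xi_apply_xi_eq_zero (hA : A ∈ G.LGset L) {p q : G.Path}
    (h : ∀ p₁ (h₁ : G.Composable p₁ q), G.pcomp p₁ q h₁ ≠ p) : ⟪G.xi p, A (G.xi q)⟫_ℂ = 0 := by
  refine hL.inner_apply_eq_zero ?_ (fun u => ?_) hA
  · rw [inner_xi_xi, if_neg]
    rintro rfl
    exact h _ (composable_vpath_prng p) rfl
  · by_cases hu : G.Composable u q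
    · rw [hL.1 u q hu, inner_xi_xi, if_neg (h u hu).symm]
    · rw [hL.2 u q hu, inner_zero_right]

lemma inner_xi_apply_xi_eq_zero_of_coeff (hA : A ∈ G.LGset L) {p : G.Path}
    (hp : ∀ p₁, IsFactor p₁ p → coeff p₁ A = 0) (q : G.Path) : ⟪G.xi p, A (G.xi q)⟫_ℂ = 0 := by
  by_cases hex : ∃ p₁ h, G.pcomp p₁ q h = p
  · obtain ⟨p₁, h, rfl⟩ := hex
    rw [hL.inner_xi_pcomp_apply_xi_eq_coeff hA h]
    exact hp p₁ (isFactor_pcomp_left h)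
  · push Not at hex
    exact hL.inner_xi_apply_xi_eq_zero hA hex

lemma eq_zero_of_coeff_eq_zero (hA : A ∈ G.LGset L) (h : ∀ p, coeff p A = 0) : A = 0 :=
  ext_xi fun q => ext_inner_xi fun p => by
    rw [zero_apply, inner_zero_right]
    exact hL.inner_xi_apply_xi_eq_zero_of_coeff hA (fun p₁ _ => h p₁) q

lemma coeff_L_mul_mul_L (hA : A ∈ G.LGset L) {q u q' : G.Path} (h₁ : G.Composable u q')
    (h₂ : G.Composable q (G.pcomp u q' h₁)) :
    coeff (G.pcomp q (G.pcomp u q' h₁) h₂) (L q * A * L q') = coeff u A := by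
  rw [coeff_apply, mul_apply_eq_comp, mul_apply_eq_comp, psrc_pcomp, psrc_pcomp,
    hL.apply_xi_vpath, if_pos rfl, hL.inner_xi_pcomp_apply, hL.inner_xi_pcomp_apply_xi_eq_coeff hA]

lemma coeff_L_mul_mul_L_eq_zero (hA : A ∈ G.LGset L) {q q' v : G.Path}
    (h : ∀ u (h₁ : G.Composable u q') h₂, G.pcomp q (G.pcomp u q' h₁) h₂ ≠ v) :
    coeff v (L q * A * L q') = 0 := by
  rw [coeff_apply, mul_apply_eq_comp, mul_apply_eq_comp, hL.apply_xi_vpath]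
  split_ifs
  · by_cases hex : ∃ v₀ hv₀, G.pcomp q v₀ hv₀ = v
    · obtain ⟨v₀, hv₀, rfl⟩ := hex
      rw [hL.inner_xi_pcomp_apply]
      refine hL.inner_xi_apply_xi_eq_zero hA fun u h₁ hu => h u h₁ (hu ▸ hv₀) ?_
      subst hu
      rfl
    · push Not at hex
      exact hL.inner_xi_apply_eq_zero hex _
  · simp

variable {a b : G.FockSpace →L[ℂ] G.FockSpace}

lemma mul_mem_vanishingIdeal_left {w : G.Path} (ha : a ∈ G.LGset L)
    (hb : b ∈ G.vanishingIdeal L w) :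
    a * b ∈ G.vanishingIdeal L w := by
  obtain ⟨hbL, hbw⟩ := mem_vanishingIdeal.1 hb
  refine mem_vanishingIdeal.2 ⟨(G.freeSemigroupoidAlgebra L).mul_mem ha hbL, fun p hp => ?_⟩
  have hb' : ∀ v, IsFactor v p → ⟪G.xi v, b (G.xi (G.vpath (G.psrc p)))⟫_ℂ = 0 := fun v hv =>
    hL.inner_xi_apply_xi_eq_zero_of_coeff hbL (fun p₁ h₁ => hbw p₁ (h₁.trans (hv.trans hp))) _
  rw [coeff_apply, mul_apply_eq_comp]
  refine hL.inner_apply_eq_zero (hb' p (.refl p)) (fun u => ?_) ha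
  by_cases hex : ∃ v hv, G.pcomp u v hv = p
  · obtain ⟨v, hv, rfl⟩ := hex
    rw [hL.inner_xi_pcomp_apply]
    exact hb' v (isFactor_pcomp_right hv)
  · push Not at hex
    exact hL.inner_xi_apply_eq_zero hex _

lemma mul_mem_vanishingIdeal_right {w : G.Path} (ha : a ∈ G.LGset L)
    (hb : b ∈ G.vanishingIdeal L w) :
    b * a ∈ G.vanishingIdeal L w := by
  obtain ⟨hbL, hbw⟩ := mem_vanishingIdeal.1 hb
  refine mem_vanishingIdeal.2 ⟨(G.freeSemigroupoidAlgebra L).mul_mem hbL ha, fun p hp => ?_⟩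
  have hb' : ∀ q, ⟪G.xi p, b (G.xi q)⟫_ℂ = 0 :=
    hL.inner_xi_apply_xi_eq_zero_of_coeff hbL fun p₁ h₁ => hbw p₁ (h₁.trans hp)
  rw [coeff_apply, mul_apply_eq_comp, ← ContinuousLinearMap.adjoint_inner_left]
  refine hL.inner_apply_eq_zero (by rw [ContinuousLinearMap.adjoint_inner_left]; exact hb' _)
    (fun u => ?_) ha
  rw [ContinuousLinearMap.adjoint_inner_left, hL.apply_xi_vpath]
  split_ifs
  · exact hb' u
  · simp

lemma isWotClosedIdeal_vanishingIdeal (w : G.Path) :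
    G.IsWotClosedIdeal L (G.vanishingIdeal L w) := by
  refine ⟨fun A hA => (mem_vanishingIdeal.1 hA).1, zero_mem _, fun a ha b hb => add_mem ha hb,
    fun c a ha => Submodule.smul_mem _ c ha, fun a ha b hb =>
    ⟨hL.mul_mem_vanishingIdeal_left ha hb, hL.mul_mem_vanishingIdeal_right ha hb⟩,
    wotClosure_eq_self (isClosed_preimage_vanishingIdeal w)⟩

lemma exists_mem_coeff_factor_eq_zero {w : G.Path} {K : Set (G.FockSpace →L[ℂ] G.FockSpace)}
    (hK : G.IsWotClosedIdeal L K) (hKw : ¬ K ⊆ G.vanishingIdeal L w) :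
    ∃ B ∈ K, coeff w B ≠ 0 ∧ ∀ p, IsFactor p w → p ≠ w → coeff p B = 0 := by
  obtain ⟨hsub, -, -, -, hmul, -⟩ := hK
  obtain ⟨z, hzK, hzw⟩ := Set.not_subset.1 hKw
  have hz := hsub hzK
  have hnz : {u | IsFactor u w ∧ coeff u z ≠ 0}.Nonempty := by
    by_contra hempty
    refine hzw (mem_vanishingIdeal.2 ⟨hz, fun p hp => by_contra fun hne => hempty ⟨p, hp, hne⟩⟩)
  obtain ⟨u, ⟨⟨q, q', h₁, h₂, rfl⟩, hu⟩, hmin⟩ := (measure G.plen).wf.has_min _ hnz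
  refine ⟨L q * z * L q', (hmul _ (L_mem_LGset q') _ (hmul _ (L_mem_LGset q) z hzK).1).2,
    by rwa [hL.coeff_L_mul_mul_L hz], fun p hp hpw => ?_⟩
  by_cases hex : ∃ u' h₁' h₂', G.pcomp q (G.pcomp u' q' h₁') h₂' = p
  · obtain ⟨u', h₁', h₂', rfl⟩ := hex
    rw [hL.coeff_L_mul_mul_L hz]
    by_contra hne
    refine hmin u' ⟨(isFactor_pcomp_left h₁').trans ((isFactor_pcomp_right h₂').trans hp), hne⟩ ?_
    have hlt := hp.plen_lt hpw
    simp only [plen_pcomp] at hlt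
    exact show G.plen u' < G.plen u by omega
  · push Not at hex
    exact hL.coeff_L_mul_mul_L_eq_zero hz hex

lemma isMeetIrreducible_vanishingIdeal (w : G.Path) :
    G.IsMeetIrreducible L (G.vanishingIdeal L w) := by
  rintro ⟨J₁, J₂, hJ₁, hJ₂, hlt₁, hlt₂, hJ⟩
  obtain ⟨B₁, hB₁, hB₁w, hB₁p⟩ := hL.exists_mem_coeff_factor_eq_zero hJ₁ hlt₁.not_subset
  obtain ⟨B₂, hB₂, hB₂w, hB₂p⟩ := hL.exists_mem_coeff_factor_eq_zero hJ₂ hlt₂.not_subset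
  obtain ⟨hsub₁, -, -, hsmul₁, -, -⟩ := hJ₁
  obtain ⟨hsub₂, -, hadd₂, hsmul₂, -, -⟩ := hJ₂
  have hdiff : coeff w B₂ • B₁ - coeff w B₁ • B₂ ∈ G.vanishingIdeal L w := by
    refine mem_vanishingIdeal.2 ⟨?_, fun p hp => ?_⟩
    · exact sub_mem ((G.freeSemigroupoidAlgebra L).smul_mem (hsub₁ hB₁) _)
        ((G.freeSemigroupoidAlgebra L).smul_mem (hsub₂ hB₂) _)
    · by_cases hpw : p = w
      · subst hpw
        simp [mul_comm]
      · simp [hB₁p p hp hpw, hB₂p p hp hpw]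
  rw [← SetLike.mem_coe, hJ] at hdiff
  have hB₁J₂ : coeff w B₂ • B₁ ∈ J₂ := by
    simpa using hadd₂ _ hdiff.2 _ (hsmul₂ (coeff w B₁) _ hB₂)
  have hB₁J : coeff w B₂ • B₁ ∈ J₁ ∩ J₂ := ⟨hsmul₁ _ _ hB₁, hB₁J₂⟩
  rw [← hJ, SetLike.mem_coe] at hB₁J
  simpa [hB₁w, hB₂w] using (mem_vanishingIdeal.1 hB₁J).2 w (.refl w)

end IsLeftRegular

end DGraph

/-- **Corollary (Davidson–Katsoulis).**
The meet irreducible WOT-closed two-sided ideals of a free semigroupoid algebra `𝔏_G`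
have zero intersection. -/
theorem meet_irreducible_ideals_have_zero_intersection
    (G : DGraph) (L : G.Path → (G.FockSpace →L[ℂ] G.FockSpace)) (hL : G.IsLeftRegular L) :
    ∀ A ∈ G.LGset L,
      (∀ J, G.IsWotClosedIdeal L J → G.IsMeetIrreducible L J → A ∈ J) → A = 0 := by
  intro A hA hmeet
  refine hL.eq_zero_of_coeff_eq_zero hA fun w => ?_
  have hAw := hmeet _ (hL.isWotClosedIdeal_vanishingIdeal w) (hL.isMeetIrreducible_vanishingIdeal w)
  exact (DGraph.mem_vanishingIdeal.1 hAw).2 w (.refl w)
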